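/- arXiv:2208.02522 — 3 statements merged into one kernel-verified Lean document; each statement's English description precedes it below -/
import Mathlib

section
/- Let G be a finite simple graph and M a minimal edge dominating set of G. Let r be a vertex such that every neighbor of r is adjacent to some vertex of degree 1, and every neighbor p of r satisfies: some edge of M is incident to p. If an edge (p, r) ∈ M with p a neighbor of r, then (p,r) is the unique edge of M incident to p. -/
variable {V : Type*} [Fintype V] [DecidableEq V]

/-- Edge `e` dominates edge `f` if they share a common vertex
(this includes the case `e = f`, since every edge is nonempty). -/
def EDom {V : Type*} (e f : Sym2 V) : Prop := ∃ x, x ∈ e ∧ x ∈ f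

/-- `M` is an edge dominating set of `G`. -/
def IsEDS {V : Type*} (G : SimpleGraph V) (M : Set (Sym2 V)) : Prop :=
  M ⊆ G.edgeSet ∧ ∀ e ∈ G.edgeSet, ∃ f ∈ M, EDom f e

/-- `M` is a minimal edge dominating set of `G`: it is an edge dominating set and
no proper subset of it is an edge dominating set. -/
def IsMinEDS {V : Type*} (G : SimpleGraph V) (M : Set (Sym2 V)) : Prop :=
  IsEDS G M ∧ ∀ M' : Set (Sym2 V), M' ⊂ M → ¬ IsEDS G M'

/-- `M` is a matching of `G`: a set of edges, no two distinct ones sharing a vertex. -/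
def IsMatching' {V : Type*} (G : SimpleGraph V) (M : Set (Sym2 V)) : Prop :=
  M ⊆ G.edgeSet ∧ ∀ e ∈ M, ∀ f ∈ M, e ≠ f → ¬ EDom e f

/-- `M` is a maximal matching of `G`. -/
def IsMaxMatching' {V : Type*} (G : SimpleGraph V) (M : Set (Sym2 V)) : Prop :=
  IsMatching' G M ∧ ∀ e ∈ G.edgeSet, e ∉ M → ¬ IsMatching' G (insert e M)

theorem IsEDS.diff_singleton {V : Type*} {G : SimpleGraph V} {M : Set (Sym2 V)} {e : Sym2 V}
    (hM : IsEDS G M) (h : ∀ x ∈ e, ∀ y, G.Adj x y → ∃ f ∈ M \ {e}, x ∈ f ∨ y ∈ f) :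
    IsEDS G (M \ {e}) := by
  refine ⟨Set.sdiff_subset.trans hM.1, fun e' he' => ?_⟩
  obtain ⟨g, hg, x, hxg, hxe'⟩ := hM.2 e' he'
  by_cases hge : g = e
  · subst hge
    obtain ⟨y, rfl⟩ := Sym2.mem_iff_exists.mp hxe'
    obtain ⟨f, hf, hxf | hyf⟩ := h x hxg y he'
    · exact ⟨f, hf, x, hxf, Sym2.mem_mk_left x y⟩
    · exact ⟨f, hf, y, hyf, Sym2.mem_mk_right x y⟩
  · exact ⟨g, ⟨hg, hge⟩, x, hxg, hxe'⟩

theorem IsMinEDS.not_isEDS_diff_singleton {V : Type*} {G : SimpleGraph V} {M : Set (Sym2 V)}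
    {e : Sym2 V} (hM : IsMinEDS G M) (he : e ∈ M) : ¬ IsEDS G (M \ {e}) :=
  hM.2 _ ⟨Set.sdiff_subset, fun h => (h he).2 rfl⟩

theorem purpleRedEdge_unique_general (G : SimpleGraph V)
    (M : Set (Sym2 V)) (hM : IsMinEDS G M) (r : V)
    (hinc : ∀ p, G.Adj r p → ∃ f ∈ M, p ∈ f)
    (p : V) (he : s(p, r) ∈ M) :
    ∀ f ∈ M, p ∈ f → f = s(p, r) := by
  intro f hf hpf
  by_contra hne
  -- Removing `s(p, r)` keeps `M` dominating: `f` takes over at `p`, and at `r` every edge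
  -- `s(r, q)` is dominated through `q`, whose `M`-edge is `s(p, r)` only when `q = p`.
  refine hM.not_isEDS_diff_singleton he (hM.1.diff_singleton fun x hx q hxq => ?_)
  rcases Sym2.mem_iff.mp hx with rfl | rfl
  · exact ⟨f, ⟨hf, hne⟩, Or.inl hpf⟩
  · obtain ⟨g, hg, hqg⟩ := hinc q hxq
    by_cases hgpr : g = s(p, x)
    · subst hgpr
      have hqp : q = p := (Sym2.mem_iff.mp hqg).resolve_right hxq.ne'
      exact ⟨f, ⟨hf, hne⟩, Or.inr (hqp ▸ hpf)⟩
    · exact ⟨g, ⟨hg, hgpr⟩, Or.inr hqg⟩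

/-- If every neighbor of r is "purple" (adjacent to a degree-1 vertex) and every
neighbor of r is incident to an edge of M, then a purple-red edge (p,r) ∈ M is the
unique edge of M incident to p. -/
theorem purpleRedEdge_unique (G : SimpleGraph V) [DecidableRel G.Adj]
    (M : Set (Sym2 V)) (hM : IsMinEDS G M) (r : V)
    (hpurple : ∀ p, G.Adj r p → ∃ b, G.Adj p b ∧ G.degree b = 1)
    (hinc : ∀ p, G.Adj r p → ∃ f ∈ M, p ∈ f)
    (p : V) (hadj : G.Adj r p) (he : s(p, r) ∈ M) :
    ∀ f ∈ M, p ∈ f → f = s(p, r) :=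
  purpleRedEdge_unique_general G M hM r hinc p he
end

section
/- Let G be a finite simple graph and M a minimal edge dominating set of G. Suppose e = {u,v} ∈ M and e' = {u,w} ∈ M are two distinct edges of M sharing the endpoint u. Then e has a private edge not incident to u; i.e., there exists an edge f of G with f ∩ {u} = ∅, f shares an endpoint with e (hence contains v), and f is dominated by no edge of M other than e. -/
variable {V : Type*} [Fintype V] [DecidableEq V]

theorem eDom_mk_iff {V : Type*} {u v : V} {f : Sym2 V} : EDom s(u, v) f ↔ u ∈ f ∨ v ∈ f := by
  simp [EDom]

theorem IsMinEDS.exists_private_edge {V : Type*} {G : SimpleGraph V} {M : Set (Sym2 V)}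
    (hM : IsMinEDS G M) {e : Sym2 V} (he : e ∈ M) :
    ∃ f ∈ G.edgeSet, EDom e f ∧ ∀ g ∈ M, g ≠ e → ¬ EDom g f := by
  obtain ⟨⟨hMG, hdom⟩, hmin⟩ := hM
  have hnot : ¬ IsEDS G (M \ {e}) := hmin _ (Set.sdiff_singleton_ssubset.mpr he)
  obtain ⟨f, hf, hundom⟩ : ∃ f ∈ G.edgeSet, ∀ g ∈ M \ {e}, ¬ EDom g f := by
    by_contra! h
    exact hnot ⟨Set.sdiff_subset.trans hMG, h⟩
  obtain ⟨g, hg, hgf⟩ := hdom f hf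
  have hge : g = e := by_contra fun hne => hundom g ⟨hg, hne⟩ hgf
  exact ⟨f, hf, hge ▸ hgf, fun g hg hne => hundom g ⟨hg, hne⟩⟩

/-- If two distinct edges of a minimal EDS share the endpoint u, then each of them
has a private edge avoiding u. -/
theorem private_edge_avoids_shared (G : SimpleGraph V) (M : Set (Sym2 V))
    (hM : IsMinEDS G M) (u v w : V) (hvw : v ≠ w)
    (h1 : s(u, v) ∈ M) (h2 : s(u, w) ∈ M) :
    ∃ f ∈ G.edgeSet, u ∉ f ∧ v ∈ f ∧ ∀ g ∈ M, g ≠ s(u, v) → ¬ EDom g f := by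
  obtain ⟨f, hf, hdom, hpriv⟩ := hM.exists_private_edge h1
  have huf : u ∉ f := fun hu =>
    hpriv _ h2 (mt Sym2.congr_right.mp hvw.symm) (eDom_mk_iff.mpr (Or.inl hu))
  exact ⟨f, hf, huf, (eDom_mk_iff.mp hdom).resolve_left huf, hpriv⟩
end

section
/- Let G be a finite simple graph, g a vertex of G with deg(g) ≥ 2k such that every neighbor of g has degree at least 2. Then G has an edge dominating set of size at least k containing no edge incident to g. (Specifically: a maximal matching in G − g together with, for each uncovered neighbor of g, one edge to a vertex other than g, can be extended to dominate all edges; its size is at least k.) -/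
variable {V : Type*} [Fintype V] [DecidableEq V]

/-!
The edges of `G` avoiding `g` form the edge set of `G.deleteIncidenceSet g`. When every neighbour
`v` of `g` has a second neighbour `w`, the edge `vw` survives the deletion, so it dominates `gv`
and covers `v`. Thus this edge set dominates all of `G`, and since each edge covers at most two
vertices while it covers the `≥ 2k` neighbours of `g`, it has at least `k` edges.
-/

namespace SimpleGraph

variable {W : Type*} {G H : SimpleGraph W}

theorem exists_adj_ne_of_two_le_degree {v : W} [Fintype (G.neighborSet v)]
    (h : 2 ≤ G.degree v) (u : W) : ∃ w, G.Adj v w ∧ w ≠ u := by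
  obtain ⟨w, hw, hwu⟩ := Finset.exists_mem_ne (s := G.neighborFinset v) h u
  exact ⟨w, (G.mem_neighborFinset v w).1 hw, hwu⟩

theorem notMem_of_mem_edgeSet_deleteIncidenceSet {g : W} {e : Sym2 W}
    (he : e ∈ (G.deleteIncidenceSet g).edgeSet) : g ∉ e := by
  rw [edgeSet_deleteIncidenceSet] at he
  exact fun hg => he.2 ⟨he.1, hg⟩

theorem neighborSet_subset_support_deleteIncidenceSet {g : W}
    (h : ∀ v, G.Adj g v → ∃ w, G.Adj v w ∧ w ≠ g) :
    G.neighborSet g ⊆ (G.deleteIncidenceSet g).support := by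
  intro v hv
  obtain ⟨w, hvw, hwg⟩ := h v hv
  exact ⟨w, deleteIncidenceSet_adj.2 ⟨hvw, (G.ne_of_adj hv).symm, hwg⟩⟩

theorem isEDS_edgeSet_deleteIncidenceSet {g : W}
    (h : G.neighborSet g ⊆ (G.deleteIncidenceSet g).support) :
    IsEDS G (G.deleteIncidenceSet g).edgeSet := by
  refine ⟨edgeSet_mono (G.deleteIncidenceSet_le g), fun e he => ?_⟩
  induction e using Sym2.ind with
  | h a b =>
    rw [mem_edgeSet] at he
    by_cases hg : g = a ∨ g = b
    · obtain ⟨v, hgv, hv⟩ : ∃ v, G.Adj g v ∧ v ∈ s(a, b) := by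
        rcases hg with rfl | rfl
        · exact ⟨b, he, Sym2.mem_mk_right _ _⟩
        · exact ⟨a, he.symm, Sym2.mem_mk_left _ _⟩
      obtain ⟨w, hvw⟩ := h hgv
      exact ⟨s(v, w), hvw, v, Sym2.mem_mk_left _ _, hv⟩
    · rw [not_or] at hg
      exact ⟨s(a, b), deleteIncidenceSet_adj.2 ⟨he, Ne.symm hg.1, Ne.symm hg.2⟩,
        a, Sym2.mem_mk_left _ _, Sym2.mem_mk_left _ _⟩

theorem card_le_two_mul_ncard_edgeSet [Finite W] [DecidableEq W] {s : Finset W}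
    (hs : (s : Set W) ⊆ H.support) : s.card ≤ 2 * H.edgeSet.ncard := by
  have hfin := H.edgeSet.toFinite
  have hcover : s ⊆ hfin.toFinset.biUnion Sym2.toFinset := by
    intro v hv
    obtain ⟨w, hvw⟩ := hs hv
    exact Finset.mem_biUnion.2
      ⟨s(v, w), hfin.mem_toFinset.2 hvw, Sym2.mem_toFinset.2 (Sym2.mem_mk_left v w)⟩
  calc s.card ≤ (hfin.toFinset.biUnion Sym2.toFinset).card := Finset.card_le_card hcover
    _ ≤ hfin.toFinset.card * 2 :=
      Finset.card_biUnion_le_card_mul _ _ _ fun e _ => by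
        rw [Sym2.card_toFinset]; split_ifs <;> norm_num
    _ = 2 * H.edgeSet.ncard := by rw [Set.ncard_eq_toFinset_card _ hfin, mul_comm]

end SimpleGraph

open SimpleGraph in
theorem eds_avoiding_highdeg_general (G : SimpleGraph V) [DecidableRel G.Adj] (k : ℕ)
    (g : V) (hdeg : 2 * k ≤ G.degree g)
    (hnb : ∀ v, G.Adj g v → 2 ≤ G.degree v) :
    ∃ D : Set (Sym2 V), IsEDS G D ∧ k ≤ D.ncard ∧ ∀ e ∈ D, g ∉ e := by
  have hsupp : G.neighborSet g ⊆ (G.deleteIncidenceSet g).support :=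
    neighborSet_subset_support_deleteIncidenceSet fun v hv =>
      exists_adj_ne_of_two_le_degree (hnb v hv) g
  refine ⟨(G.deleteIncidenceSet g).edgeSet, isEDS_edgeSet_deleteIncidenceSet hsupp, ?_,
    fun e => notMem_of_mem_edgeSet_deleteIncidenceSet⟩
  have hcard :=
    card_le_two_mul_ncard_edgeSet (s := G.neighborFinset g) (by rwa [coe_neighborFinset])
  rw [card_neighborFinset_eq_degree] at hcard
  omega

/-- A vertex g of degree ≥ 2k all of whose neighbors have degree ≥ 2 can be avoided:
there is an edge dominating set of size ≥ k with no edge incident to g. -/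
theorem eds_avoiding_highdeg (G : SimpleGraph V) [DecidableRel G.Adj] (k : ℕ)
    (hk : 1 ≤ k) (g : V) (hdeg : 2 * k ≤ G.degree g)
    (hnb : ∀ v, G.Adj g v → 2 ≤ G.degree v) :
    ∃ D : Set (Sym2 V), IsEDS G D ∧ k ≤ D.ncard ∧ ∀ e ∈ D, g ∉ e :=
  eds_avoiding_highdeg_general G k g hdeg hnb
end
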